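/- arXiv:2111.10807 — 2 statements merged into one kernel-verified Lean document; each statement's English description precedes it below -/
import Mathlib

section
/- For every irrational x in (0,1), the series ∑_{j≥1} β_{j-1}(x)·a_j(x) converges, where a_j(x) are the continued fraction partial quotients of x and β_j(x) = ∏_{i=0}^{j} G^i(x) with G the Gauss map G(y)=1/y−⌊1/y⌋ and β_{-1}(x)=1. -/
open Filter Topology Finset

/-- Gauss map `G(y) = 1/y - ⌊1/y⌋`. -/
noncomputable def gauss (x : ℝ) : ℝ := Int.fract x⁻¹

/-- `pa x j` is the `j`-th continued fraction partial quotient `a_j(x) = ⌊1/G^{j-1}(x)⌋` (for `j ≥ 1`). -/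
noncomputable def pa (x : ℝ) (j : ℕ) : ℤ := ⌊(gauss^[j-1] x)⁻¹⌋

/-- `beta x j = β_j(x) = ∏_{i=0}^{j} G^i(x)`. -/
noncomputable def beta (x : ℝ) (j : ℕ) : ℝ := ∏ i ∈ Finset.range (j+1), gauss^[i] x

/-- Convergent denominators: `q_0 = 1`, `q_1 = a_1`, `q_j = a_j q_{j-1} + q_{j-2}`. -/
noncomputable def q (x : ℝ) : ℕ → ℤ
  | 0 => 1
  | 1 => pa x 1
  | (n+2) => pa x (n+2) * q x (n+1) + q x n

/-!
Since `G^j(x) · a_{j+1} = G^j(x) · ⌊1/G^j(x)⌋ ≤ 1`, the `j`-th term `β_j a_{j+1}` is at most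
`β_{j-1}`. Two consecutive factors of `β` satisfy `y · G(y) ≤ 1/2`: indeed `y · G(y) ≤ y` and
`y · G(y) = 1 - y⌊1/y⌋ ≤ 1 - y`. Hence `β_{j+2} ≤ β_j / 2`, so `β_j ≤ (3/4)^j`
(as `(3/4)² ≥ 1/2`) and the series is dominated by a geometric one.
-/

lemma mul_floor_inv_le_one {K : Type*} [Field K] [LinearOrder K] [IsStrictOrderedRing K]
    [FloorRing K] {y : K} (hy : 0 ≤ y) : y * ⌊y⁻¹⌋ ≤ 1 := by
  rcases hy.eq_or_lt with rfl | hy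
  · simp
  calc y * ⌊y⁻¹⌋ ≤ y * y⁻¹ := mul_le_mul_of_nonneg_left (Int.floor_le _) hy.le
    _ = 1 := mul_inv_cancel₀ hy.ne'

lemma gauss_mem_Ico (y : ℝ) : gauss y ∈ Set.Ico 0 1 :=
  ⟨Int.fract_nonneg _, Int.fract_lt_one _⟩

lemma iterate_gauss_mem_Icc {x : ℝ} (hx : x ∈ Set.Icc 0 1) : ∀ n, gauss^[n] x ∈ Set.Icc 0 1
  | 0 => hx
  | n + 1 => by
    rw [Function.iterate_succ_apply']
    exact Set.Ico_subset_Icc_self (gauss_mem_Ico _)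

lemma mul_gauss_le_half {y : ℝ} (hy : y ∈ Set.Icc 0 1) : y * gauss y ≤ 1 / 2 := by
  rcases hy.1.eq_or_lt with rfl | hy₀
  · norm_num
  have hfloor : (1 : ℝ) ≤ ⌊y⁻¹⌋ := by
    exact_mod_cast Int.le_floor.2 (by simpa using (one_le_inv₀ hy₀).2 hy.2)
  have hle_y : y * gauss y ≤ y := mul_le_of_le_one_right hy₀.le (gauss_mem_Ico y).2.le
  have hle_one_sub : y * gauss y ≤ 1 - y := by
    have hsplit : y * gauss y = 1 - y * ⌊y⁻¹⌋ := by
      rw [gauss, ← Int.self_sub_floor, mul_sub, mul_inv_cancel₀ hy₀.ne']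
    nlinarith
  linarith

lemma beta_zero (x : ℝ) : beta x 0 = x := by
  simp [beta]

lemma beta_succ (x : ℝ) (j : ℕ) : beta x (j + 1) = beta x j * gauss^[j + 1] x :=
  prod_range_succ _ _

section beta

variable {x : ℝ}

lemma beta_nonneg (hx : x ∈ Set.Icc 0 1) (j : ℕ) : 0 ≤ beta x j :=
  prod_nonneg fun i _ => (iterate_gauss_mem_Icc hx i).1

lemma beta_add_two_le (hx : x ∈ Set.Icc 0 1) (j : ℕ) : beta x (j + 2) ≤ beta x j / 2 := by
  have hpair : gauss^[j + 1] x * gauss^[j + 2] x ≤ 1 / 2 := by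
    rw [Function.iterate_succ_apply' gauss (j + 1)]
    exact mul_gauss_le_half (iterate_gauss_mem_Icc hx _)
  rw [beta_succ, beta_succ, mul_assoc]
  nlinarith [beta_nonneg hx j]

lemma beta_le_geometric (hx : x ∈ Set.Icc 0 1) : ∀ j, beta x j ≤ (3 / 4 : ℝ) ^ j
  | 0 => by simpa [beta_zero] using hx.2
  | 1 => by
    have hpair := mul_gauss_le_half hx
    rw [beta_succ, beta_zero, Function.iterate_one]
    linarith
  | j + 2 => by
    have := beta_add_two_le hx j
    have := beta_le_geometric hx j
    rw [pow_add]
    nlinarith [pow_nonneg (by norm_num : (0 : ℝ) ≤ 3 / 4) j]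

lemma pa_succ (x : ℝ) (j : ℕ) : pa x (j + 1) = ⌊(gauss^[j] x)⁻¹⌋ := rfl

lemma beta_succ_mul_pa_le (hx : x ∈ Set.Icc 0 1) (j : ℕ) :
    beta x (j + 1) * pa x (j + 2) ≤ beta x j := by
  rw [beta_succ, pa_succ, mul_assoc]
  exact mul_le_of_le_one_right (beta_nonneg hx j)
    (mul_floor_inv_le_one (iterate_gauss_mem_Icc hx _).1)

end beta

theorem stmt0_general (x : ℝ) (hx : x ∈ Set.Ioo (0:ℝ) 1) :
    Summable (fun j : ℕ => beta x j * (pa x (j+1) : ℝ)) := by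
  have hx' : x ∈ Set.Icc 0 1 := Set.Ioo_subset_Icc_self hx
  rw [← summable_nat_add_iff 1]
  have hgeom := summable_geometric_of_lt_one (by norm_num) (by norm_num : (3 / 4 : ℝ) < 1)
  refine hgeom.of_nonneg_of_le (fun j => mul_nonneg (beta_nonneg hx' _) ?_) (fun j => ?_)
  · exact_mod_cast Int.floor_nonneg.2 (inv_nonneg.2 (iterate_gauss_mem_Icc hx' _).1)
  · exact (beta_succ_mul_pa_le hx' j).trans (beta_le_geometric hx' j)

/-- For every irrational `x ∈ (0,1)`, the series `∑_{j≥1} β_{j-1}(x)·a_j(x)` converges. -/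
theorem stmt0 (x : ℝ) (hx : x ∈ Set.Ioo (0:ℝ) 1) (hirr : Irrational x) :
    Summable (fun j : ℕ => beta x j * (pa x (j+1) : ℝ)) :=
  stmt0_general x hx
end

section
/- There exists an irrational x ∈ (0,1) such that lim_{j→∞} (log q_{j+1}(x))/q_j(x) = 0 but ∑_{j≥1} (log q_{j+1}(x))/q_j(x) = ∞ (i.e., the convergence criterion for the unstable manifold is strictly weaker than the Brjuno condition). -/
open Filter Topology Finset

/-!
Choose the partial quotients adaptively, `a_{n+1} = ⌈exp (q_n / (n + 1))⌉`. Then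
`log q_{n+1} = q_n / (n + 1) + O(log q_n)`, so `log q_{n+1} / q_n` lies between `1 / (n + 1)` and
`1 / (n + 1) + O(log q_n / q_n)`: it tends to `0`, but its series diverges like the harmonic one.
As all partial quotients are at least `2`, the finite continued fractions `[0; a_j, …, a_{j+n}]`
converge geometrically in `n`; the limits are the Gauss iterates of a number whose partial
quotients are the `a_j`, and which is irrational because its continued fraction never terminates.
-/

lemma dist_inv_inv_le_of_two_le {a b : ℝ} (ha : 2 ≤ a) (hb : 2 ≤ b) :
    dist a⁻¹ b⁻¹ ≤ dist a b / 4 := by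
  rw [Real.dist_eq, Real.dist_eq, inv_sub_inv (by positivity) (by positivity), abs_div,
    abs_sub_comm, abs_of_pos (by positivity : 0 < a * b)]
  gcongr
  nlinarith

section Gauss

open GenContFract

lemma exists_stream_eq_some_fr_eq_gauss_iterate {v : ℝ}
    (h : ∀ n, gauss^[n] (Int.fract v) ≠ 0) (n : ℕ) :
    ∃ p, IntFractPair.stream v n = some p ∧ p.fr = gauss^[n] (Int.fract v) := by
  induction n with
  | zero => exact ⟨_, IntFractPair.stream_zero v, rfl⟩
  | succ n ih =>
    obtain ⟨p, hp, hfr⟩ := ih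
    refine ⟨_, IntFractPair.stream_succ_of_some hp (hfr ▸ h n), ?_⟩
    rw [Function.iterate_succ_apply', ← hfr]
    rfl

lemma irrational_of_gauss_iterate_ne_zero {v : ℝ} (h : ∀ n, gauss^[n] (Int.fract v) ≠ 0) :
    Irrational v := by
  rintro ⟨r, rfl⟩
  obtain ⟨n, hn⟩ := IntFractPair.exists_nth_stream_eq_none_of_rat r
  obtain ⟨p, hp, -⟩ := exists_stream_eq_some_fr_eq_gauss_iterate h n
  have := IntFractPair.coe_stream_nth_rat_eq (K := ℝ) (q := r) rfl n
  simp [hn, hp] at this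

end Gauss

section PrescribedPartialQuotients

variable {c : ℕ → ℕ}

/-- `cfApprox c j n = [0; c j, …, c (j + n - 1)]`. -/
noncomputable def cfApprox (c : ℕ → ℕ) : ℕ → ℕ → ℝ
  | _, 0 => 0
  | j, n + 1 => ((c j : ℝ) + cfApprox c (j + 1) n)⁻¹

lemma cfApprox_mem_Icc (hc : ∀ j, 2 ≤ c j) (j n : ℕ) :
    cfApprox c j n ∈ Set.Icc (0 : ℝ) (1 / 2) := by
  induction n generalizing j with
  | zero => simp [cfApprox]
  | succ n ih =>
    have h2 : (2 : ℝ) ≤ c j + cfApprox c (j + 1) n := by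
      have : (2 : ℝ) ≤ c j := by exact_mod_cast hc j
      linarith [(ih (j + 1)).1]
    rw [cfApprox, one_div]
    exact ⟨by positivity, inv_anti₀ two_pos h2⟩

lemma dist_cfApprox_succ_le (hc : ∀ j, 2 ≤ c j) (j n : ℕ) :
    dist (cfApprox c j n) (cfApprox c j (n + 1)) ≤ 1 / 2 * (1 / 4) ^ n := by
  induction n generalizing j with
  | zero =>
    have := (cfApprox_mem_Icc hc j 1)
    rw [cfApprox, Real.dist_eq, zero_sub, abs_neg, abs_of_nonneg this.1, pow_zero, mul_one]
    exact this.2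
  | succ n ih =>
    have two_le (m : ℕ) : (2 : ℝ) ≤ c j + cfApprox c (j + 1) m := by
      have : (2 : ℝ) ≤ c j := by exact_mod_cast hc j
      linarith [(cfApprox_mem_Icc hc (j + 1) m).1]
    calc dist (cfApprox c j (n + 1)) (cfApprox c j (n + 2))
        ≤ dist ((c j : ℝ) + cfApprox c (j + 1) n) (c j + cfApprox c (j + 1) (n + 1)) / 4 :=
          dist_inv_inv_le_of_two_le (two_le n) (two_le (n + 1))
      _ ≤ 1 / 2 * (1 / 4) ^ n / 4 := by rw [dist_add_left]; gcongr; exact ih (j + 1)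
      _ = 1 / 2 * (1 / 4) ^ (n + 1) := by ring

/-- `cfTail c j = [0; c j, c (j + 1), …]`. -/
noncomputable def cfTail (c : ℕ → ℕ) (j : ℕ) : ℝ := limUnder atTop (cfApprox c j)

lemma tendsto_cfApprox (hc : ∀ j, 2 ≤ c j) (j : ℕ) :
    Tendsto (cfApprox c j) atTop (𝓝 (cfTail c j)) :=
  (cauchySeq_of_le_geometric _ _ (by norm_num) (dist_cfApprox_succ_le hc j)).tendsto_limUnder

lemma cfTail_mem_Icc (hc : ∀ j, 2 ≤ c j) (j : ℕ) : cfTail c j ∈ Set.Icc (0 : ℝ) (1 / 2) :=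
  isClosed_Icc.mem_of_tendsto (tendsto_cfApprox hc j) (.of_forall (cfApprox_mem_Icc hc j))

lemma cfTail_mem_Ico (hc : ∀ j, 2 ≤ c j) (j : ℕ) : cfTail c j ∈ Set.Ico (0 : ℝ) 1 :=
  ⟨(cfTail_mem_Icc hc j).1, (cfTail_mem_Icc hc j).2.trans_lt (by norm_num)⟩

lemma inv_cfTail (hc : ∀ j, 2 ≤ c j) (j : ℕ) :
    (cfTail c j)⁻¹ = c j + cfTail c (j + 1) := by
  have hne : (c j : ℝ) + cfTail c (j + 1) ≠ 0 := by
    have : (2 : ℝ) ≤ c j := by exact_mod_cast hc j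
    linarith [(cfTail_mem_Icc hc (j + 1)).1]
  have hlim : Tendsto (fun n ↦ cfApprox c j (n + 1)) atTop (𝓝 (c j + cfTail c (j + 1))⁻¹) :=
    ((tendsto_cfApprox hc (j + 1)).const_add _).inv₀ hne
  rw [tendsto_nhds_unique ((tendsto_add_atTop_iff_nat 1).2 (tendsto_cfApprox hc j)) hlim, inv_inv]

lemma cfTail_pos (hc : ∀ j, 2 ≤ c j) (j : ℕ) : 0 < cfTail c j := by
  have := (cfTail_mem_Icc hc (j + 1)).1
  have : (0 : ℝ) < c j := by exact_mod_cast two_pos.trans_le (hc j)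
  rw [← inv_pos, inv_cfTail hc]
  positivity

lemma gauss_cfTail (hc : ∀ j, 2 ≤ c j) (j : ℕ) : gauss (cfTail c j) = cfTail c (j + 1) := by
  rw [gauss, inv_cfTail hc, Int.fract_natCast_add, Int.fract_eq_self.2 (cfTail_mem_Ico hc _)]

lemma gauss_iterate_cfTail (hc : ∀ j, 2 ≤ c j) (j : ℕ) :
    gauss^[j] (cfTail c 0) = cfTail c j := by
  induction j with
  | zero => rfl
  | succ j ih => rw [Function.iterate_succ_apply', ih, gauss_cfTail hc]

lemma pa_cfTail (hc : ∀ j, 2 ≤ c j) (j : ℕ) : pa (cfTail c 0) (j + 1) = c j := by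
  rw [pa, Nat.add_sub_cancel, gauss_iterate_cfTail hc, inv_cfTail hc, Int.floor_natCast_add,
    Int.floor_eq_zero_iff.2 (cfTail_mem_Ico hc _), add_zero]

lemma irrational_cfTail (hc : ∀ j, 2 ≤ c j) : Irrational (cfTail c 0) := by
  refine irrational_of_gauss_iterate_ne_zero fun n ↦ ?_
  rw [Int.fract_eq_self.2 (cfTail_mem_Ico hc 0), gauss_iterate_cfTail hc]
  exact (cfTail_pos hc n).ne'

end PrescribedPartialQuotients

namespace NonBrjuno

/-- `den n` is `q_n` for the partial quotients `pq n = a_{n+1} = ⌈exp (q_n / (n + 1))⌉`. -/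
noncomputable def den : ℕ → ℕ
  | 0 => 1
  | 1 => ⌈Real.exp 1⌉₊
  | n + 2 => ⌈Real.exp (den (n + 1) / (n + 2))⌉₊ * den (n + 1) + den n

noncomputable def pq (n : ℕ) : ℕ := ⌈Real.exp (den n / (n + 1))⌉₊

lemma den_one : den 1 = pq 0 * den 0 := by simp [den, pq]

lemma den_add_two (n : ℕ) : den (n + 2) = pq (n + 1) * den (n + 1) + den n := by
  rw [den, pq]
  push_cast
  ring_nf

lemma den_pos : ∀ n, 0 < den n
  | 0 => Nat.one_pos
  | 1 => Nat.ceil_pos.2 (Real.exp_pos 1)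
  | n + 2 => by rw [den_add_two]; have := den_pos n; positivity

lemma two_le_pq (n : ℕ) : 2 ≤ pq n := by
  have : (0 : ℝ) < den n := by exact_mod_cast den_pos n
  exact Nat.lt_ceil.2 (by exact_mod_cast Real.one_lt_exp_iff.2 (by positivity))

lemma pq_mul_den_le (n : ℕ) : pq n * den n ≤ den (n + 1) := by
  cases n with
  | zero => rw [den_one]
  | succ n => rw [den_add_two]; omega

lemma den_le_succ (n : ℕ) : den n ≤ den (n + 1) :=
  (Nat.le_mul_of_pos_left _ (by linarith [two_le_pq n])).trans (pq_mul_den_le n)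

lemma den_succ_le (n : ℕ) : den (n + 1) ≤ (pq n + 1) * den n := by
  cases n with
  | zero => rw [den_one]; exact Nat.mul_le_mul_right _ (Nat.le_succ _)
  | succ n => rw [den_add_two, add_one_mul]; have := den_le_succ n; omega

lemma tendsto_den : Tendsto (fun n ↦ (den n : ℝ)) atTop atTop := by
  refine tendsto_natCast_atTop_atTop.comp (StrictMono.tendsto_atTop ?_)
  refine strictMono_nat_of_lt_succ fun n ↦ ?_
  nlinarith [pq_mul_den_le n, two_le_pq n, den_pos n]

lemma exp_le_den_succ (n : ℕ) : Real.exp (den n / (n + 1)) ≤ den (n + 1) := by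
  calc Real.exp (den n / (n + 1)) ≤ pq n := Nat.le_ceil _
    _ ≤ pq n * den n := by exact_mod_cast Nat.le_mul_of_pos_right _ (den_pos n)
    _ ≤ den (n + 1) := by exact_mod_cast pq_mul_den_le n

lemma den_succ_le_three_mul_exp (n : ℕ) :
    (den (n + 1) : ℝ) ≤ 3 * Real.exp (den n / (n + 1)) * den n := by
  have hexp : 1 ≤ Real.exp (den n / (n + 1)) := Real.one_le_exp (by positivity)
  have hpq : (pq n : ℝ) < Real.exp (den n / (n + 1)) + 1 := Nat.ceil_lt_add_one (by positivity)
  calc (den (n + 1) : ℝ) ≤ (pq n + 1) * den n := by exact_mod_cast den_succ_le n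
    _ ≤ 3 * Real.exp (den n / (n + 1)) * den n := by gcongr; linarith

lemma inv_succ_le_log_den_div (n : ℕ) :
    1 / ((n : ℝ) + 1) ≤ Real.log (den (n + 1)) / den n := by
  have hden : (0 : ℝ) < den n := by exact_mod_cast den_pos n
  have hlog : (den n : ℝ) / (n + 1) ≤ Real.log (den (n + 1)) :=
    (Real.le_log_iff_exp_le (by exact_mod_cast den_pos _)).2 (exp_le_den_succ n)
  calc 1 / ((n : ℝ) + 1) = (den n / (n + 1)) / den n := by field_simp
    _ ≤ Real.log (den (n + 1)) / den n := by gcongr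

lemma log_den_div_le (n : ℕ) : Real.log (den (n + 1)) / den n ≤
    1 / ((n : ℝ) + 1) + (Real.log 3 + Real.log (den n)) / den n := by
  have hden : (0 : ℝ) < den n := by exact_mod_cast den_pos n
  have hlog : Real.log (den (n + 1)) ≤ den n / (n + 1) + Real.log 3 + Real.log (den n) := by
    calc Real.log (den (n + 1)) ≤ Real.log (3 * Real.exp (den n / (n + 1)) * den n) :=
          Real.log_le_log (by exact_mod_cast den_pos _) (den_succ_le_three_mul_exp n)
      _ = den n / (n + 1) + Real.log 3 + Real.log (den n) := by
          rw [Real.log_mul (by positivity) hden.ne', Real.log_mul (by norm_num) (by positivity),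
            Real.log_exp]
          ring
  calc Real.log (den (n + 1)) / den n
      ≤ (den n / (n + 1) + Real.log 3 + Real.log (den n)) / den n := by gcongr
    _ = 1 / ((n : ℝ) + 1) + (Real.log 3 + Real.log (den n)) / den n := by field_simp; ring

lemma tendsto_log_den_div :
    Tendsto (fun n ↦ Real.log (den (n + 1)) / den n) atTop (𝓝 0) := by
  have hlog : Tendsto (fun n ↦ Real.log (den n) / den n) atTop (𝓝 0) :=
    Real.isLittleO_log_id_atTop.tendsto_div_nhds_zero.comp tendsto_den
  have hbound := tendsto_one_div_add_atTop_nhds_zero_nat.add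
    (((tendsto_const_nhds (x := Real.log 3)).div_atTop tendsto_den).add hlog)
  simp only [add_zero, ← add_div] at hbound
  exact squeeze_zero (fun n ↦ (inv_succ_le_log_den_div n).trans' (by positivity))
    log_den_div_le hbound

lemma not_summable_log_den_div :
    ¬ Summable (fun n ↦ Real.log (den (n + 1)) / den n) := fun h ↦
  Real.not_summable_one_div_natCast <| (summable_nat_add_iff 1).1 <|
    h.of_nonneg_of_le (fun n ↦ by positivity) fun n ↦ by
      simpa using inv_succ_le_log_den_div n

lemma q_cfTail_pq : ∀ n, q (cfTail pq 0) n = den n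
  | 0 => rfl
  | 1 => by rw [q, pa_cfTail two_le_pq, den_one, den, mul_one]
  | n + 2 => by
    rw [q, pa_cfTail two_le_pq, q_cfTail_pq n, q_cfTail_pq (n + 1), den_add_two]
    push_cast
    ring

end NonBrjuno

/-- There is an irrational `x ∈ (0,1)` with `log q_{j+1}/q_j → 0` which is not a Brjuno number. -/
theorem stmt17 :
    ∃ x : ℝ, x ∈ Set.Ioo (0:ℝ) 1 ∧ Irrational x ∧
      Tendsto (fun j : ℕ => Real.log (q x (j+1)) / (q x j : ℝ)) atTop (nhds 0) ∧
      ¬ Summable (fun j : ℕ => Real.log (q x (j+2)) / (q x (j+1) : ℝ)) := by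
  have hc := NonBrjuno.two_le_pq
  have hq (n : ℕ) : (q (cfTail NonBrjuno.pq 0) n : ℝ) = NonBrjuno.den n := by
    exact_mod_cast NonBrjuno.q_cfTail_pq n
  refine ⟨cfTail NonBrjuno.pq 0, ⟨cfTail_pos hc 0, (cfTail_mem_Ico hc 0).2⟩,
    irrational_cfTail hc, ?_, ?_⟩
  · simpa only [hq] using NonBrjuno.tendsto_log_den_div
  · simpa only [hq] using (summable_nat_add_iff 1).not.2 NonBrjuno.not_summable_log_den_div
end
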